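/- arXiv:2009.11275 — 6 statements merged into one kernel-verified Lean document; each statement's English description precedes it below -/
import Mathlib

section
/- Let Ω ⊂ ℝ^d be a bounded convex open set containing a ball of radius r > 0. Then the closure of Ω satisfies an interior cone condition with radius r and angle θ = 2 arcsin(r / (2 diam Ω)). -/
/-!
Let `K` be the closure of `Ω`, `D = diam Ω`, `x ∈ K`, and let `ξ` point from `x` to the centre
`z` of the ball, at distance `h = ‖z - x‖ ≤ D`. Since `cos θ = 1 - r² / (2D²)`, a unit vector `y`
of the cone satisfies `‖h • y - (z - x)‖ ≤ r h / D ≤ r`, so `x + h • y` lies in the closed ball and,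
by convexity, so does the whole segment from `x` to it. Beyond distance `h` the cone stays in the
ball itself, because `cos θ ≥ 1/2` gives `‖t • y - (z - x)‖ ≤ t ≤ r` whenever `h ≤ t`.
-/

open Metric Set

/-- The cone with apex `x`, direction `ξ`, height `r` and opening angle `θ`. -/
noncomputable def cone {d : ℕ} (x ξ : EuclideanSpace ℝ (Fin d)) (r θ : ℝ) :
    Set (EuclideanSpace ℝ (Fin d)) :=
  {z | ∃ (y : EuclideanSpace ℝ (Fin d)) (lam : ℝ), ‖y‖ = 1 ∧
    Real.cos θ ≤ (inner ℝ y ξ : ℝ) ∧ lam ∈ Set.Icc 0 r ∧ z = x + lam • y}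

theorem Real.cos_two_mul_arcsin {a : ℝ} (ha₁ : -1 ≤ a) (ha₂ : a ≤ 1) :
    Real.cos (2 * Real.arcsin a) = 1 - 2 * a ^ 2 := by
  rw [Real.cos_two_mul, Real.cos_arcsin, Real.sq_sqrt (by nlinarith)]
  ring

theorem exists_norm_eq_one_and_eq_norm_smul {E : Type*} [NormedAddCommGroup E] [NormedSpace ℝ E]
    [Nontrivial E] (v : E) : ∃ ξ : E, ‖ξ‖ = 1 ∧ v = ‖v‖ • ξ := by
  rcases eq_or_ne v 0 with rfl | hv
  · obtain ⟨ξ, hξ⟩ := exists_norm_eq E zero_le_one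
    exact ⟨ξ, hξ, by simp⟩
  · exact ⟨‖v‖⁻¹ • v, by simp [norm_smul, hv], by simp [smul_smul, hv]⟩

section InnerProductSpace

variable {E : Type*} [NormedAddCommGroup E] [InnerProductSpace ℝ E]

open scoped RealInnerProductSpace

theorem norm_smul_sub_le_of_norm_le_two_mul_inner {y v : E} {t : ℝ} (hy : ‖y‖ = 1)
    (hvt : ‖v‖ ≤ t) (hyv : ‖v‖ ≤ 2 * ⟪y, v⟫) : ‖t • y - v‖ ≤ t := by
  have ht : 0 ≤ t := (norm_nonneg v).trans hvt
  have hsq : ‖t • y - v‖ ^ 2 ≤ t ^ 2 := by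
    rw [norm_sub_sq_real, norm_smul, inner_smul_left, hy, Real.norm_eq_abs, mul_one, sq_abs]
    simp only [conj_trivial]
    nlinarith [norm_nonneg v]
  exact (pow_le_pow_iff_left₀ (norm_nonneg _) ht two_ne_zero).mp hsq

theorem norm_norm_smul_sub_le_of_inner_ge {y v : E} {a : ℝ} (hy : ‖y‖ = 1) (ha : 0 ≤ a)
    (hyv : ‖v‖ * (1 - 2 * a ^ 2) ≤ ⟪y, v⟫) : ‖‖v‖ • y - v‖ ≤ 2 * a * ‖v‖ := by
  have hsq : ‖‖v‖ • y - v‖ ^ 2 ≤ (2 * a * ‖v‖) ^ 2 := by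
    rw [norm_sub_sq_real, norm_smul, inner_smul_left, hy, norm_norm, mul_one]
    simp only [conj_trivial]
    nlinarith [norm_nonneg v]
  exact (pow_le_pow_iff_left₀ (norm_nonneg _) (by positivity) two_ne_zero).mp hsq

theorem Convex.add_smul_mem_of_closedBall_subset {K : Set E} (hK : Convex ℝ K) {x z y : E}
    {r D t : ℝ} (hr : 0 < r) (hrD : r ≤ D) (hxz : ‖z - x‖ ≤ D) (hball : closedBall z r ⊆ K)
    (hx : x ∈ K) (hy : ‖y‖ = 1) (hyv : ‖z - x‖ * (1 - 2 * (r / (2 * D)) ^ 2) ≤ ⟪y, z - x⟫)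
    (ht : t ∈ Icc 0 r) : x + t • y ∈ K := by
  have hD : 0 < D := hr.trans_le hrD
  have ha₀ : 0 ≤ r / (2 * D) := by positivity
  have ha : r / (2 * D) ≤ 1 / 2 := by
    rw [div_le_iff₀ (by positivity)]
    linarith
  have mem_of_norm_le {s : ℝ} (hs : ‖s • y - (z - x)‖ ≤ r) : x + s • y ∈ K := by
    apply hball
    rwa [mem_closedBall, dist_eq_norm, show x + s • y - z = s • y - (z - x) by abel]
  rcases le_or_gt ‖z - x‖ t with hzt | htz
  · refine mem_of_norm_le ((norm_smul_sub_le_of_norm_le_two_mul_inner hy hzt ?_).trans ht.2)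
    have hsq : (r / (2 * D)) ^ 2 ≤ 1 / 4 := by nlinarith
    nlinarith [mul_le_mul_of_nonneg_left hsq (norm_nonneg (z - x))]
  · have hzx : 0 < ‖z - x‖ := ht.1.trans_lt htz
    have hfar : x + ‖z - x‖ • y ∈ K := by
      refine mem_of_norm_le ((norm_norm_smul_sub_le_of_inner_ge hy ha₀ hyv).trans ?_)
      calc 2 * (r / (2 * D)) * ‖z - x‖ = r * (‖z - x‖ / D) := by field_simp
        _ ≤ r * 1 := by gcongr; exact (div_le_one hD).mpr hxz
        _ = r := mul_one r
    have hseg := hK.add_smul_mem hx hfar ⟨div_nonneg ht.1 hzx.le, (div_le_one hzx).mpr htz.le⟩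
    rwa [smul_smul, div_mul_cancel₀ _ hzx.ne'] at hseg

end InnerProductSpace

theorem closure_convex_coneCondition_general {d : ℕ} (hd : 0 < d)
    (Ω : Set (EuclideanSpace ℝ (Fin d))) (hΩb : Bornology.IsBounded Ω)
    (hΩc : Convex ℝ Ω)
    (z : EuclideanSpace ℝ (Fin d)) (r : ℝ) (hr : 0 < r) (hball : ball z r ⊆ Ω) :
    ∀ x ∈ closure Ω, ∃ ξ : EuclideanSpace ℝ (Fin d), ‖ξ‖ = 1 ∧
      cone x ξ r (2 * Real.arcsin (r / (2 * Metric.diam Ω))) ⊆ closure Ω := by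
  have : NeZero d := ⟨hd.ne'⟩
  intro x hx
  have hB : closedBall z r ⊆ closure Ω := closure_ball z hr.ne' ▸ closure_mono hball
  have hrD : r ≤ diam Ω := by
    have := diam_mono hball hΩb
    rw [diam_ball_eq z hr.le] at this
    linarith
  have hxz : ‖z - x‖ ≤ diam Ω := by
    rw [← dist_eq_norm, ← diam_closure]
    exact dist_le_diam_of_mem hΩb.closure (subset_closure (hball (mem_ball_self hr))) hx
  have ha : r / (2 * diam Ω) ≤ 1 := (div_le_one (by linarith)).mpr (by linarith)
  obtain ⟨ξ, hξ, hv⟩ := exists_norm_eq_one_and_eq_norm_smul (z - x)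
  refine ⟨ξ, hξ, ?_⟩
  rintro _ ⟨y, t, hy, hyξ, ht, rfl⟩
  refine hΩc.closure.add_smul_mem_of_closedBall_subset hr hrD hxz hB hx hy ?_ ht
  rw [Real.cos_two_mul_arcsin (by linarith [div_pos hr (by linarith : 0 < 2 * diam Ω)]) ha]
    at hyξ
  conv_rhs => rw [hv, inner_smul_right]
  exact mul_le_mul_of_nonneg_left hyξ (norm_nonneg _)

/-- A bounded convex open set containing a ball of radius `r` has a closure satisfying
an interior cone condition with radius `r` and angle `θ = 2 arcsin(r / (2 diam Ω))`. -/
theorem closure_convex_coneCondition {d : ℕ} (hd : 0 < d)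
    (Ω : Set (EuclideanSpace ℝ (Fin d))) (hΩb : Bornology.IsBounded Ω)
    (hΩc : Convex ℝ Ω) (hΩo : IsOpen Ω)
    (z : EuclideanSpace ℝ (Fin d)) (r : ℝ) (hr : 0 < r) (hball : ball z r ⊆ Ω) :
    ∀ x ∈ closure Ω, ∃ ξ : EuclideanSpace ℝ (Fin d), ‖ξ‖ = 1 ∧
      cone x ξ r (2 * Real.arcsin (r / (2 * Metric.diam Ω))) ⊆ closure Ω :=
  closure_convex_coneCondition_general hd Ω hΩb hΩc z r hr hball
end

section
/- Let K ⊂ ℝ^d be a nonempty compact set and r : K → (0, ∞) an upper semi-continuous function. Then there exist finitely many points y₁, …, y_N ∈ K such that: (i) the open ℓ^∞-cubes Q_i = B^∞(y_i, r(y_i)) cover K; (ii) the cubes B^∞(y_i, r(y_i)/2) are pairwise disjoint; (iii) every point y ∈ ℝ^d is contained in at most 2^d of the cubes Q_i. -/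
/-!
Greedy selection: repeatedly pick, in the still uncovered part of `K`, a point where `r` is
maximal (it exists since `r` is upper semicontinuous and the uncovered part stays compact) and
remove its cube. Every later center lies outside every earlier cube and has no larger radius.
This gives disjointness of the half-cubes, and it forbids two cubes containing a point `z` from
having centers in the same closed orthant around `z`, whence the bound `2^d`. The process stops:
otherwise Cantor's intersection theorem yields a point `x` never covered, all radii are at
least `r x > 0`, and the centers would form an `r x`-separated sequence in the compact `K`.
-/

open Metric Set

/-- The open `ℓ^∞`-cube of radius `ρ` centered at `x`. -/
def cubeInfty {d : ℕ} (x : EuclideanSpace ℝ (Fin d)) (ρ : ℝ) :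
    Set (EuclideanSpace ℝ (Fin d)) :=
  {z | ∀ i, |z i - x i| < ρ}

lemma IsCompact.exists_lt_dist_lt {X : Type*} [PseudoMetricSpace X] {K : Set X}
    (hK : IsCompact K) {u : ℕ → X} (hu : ∀ n, u n ∈ K) {ε : ℝ} (hε : 0 < ε) :
    ∃ m n, m < n ∧ dist (u m) (u n) < ε := by
  obtain ⟨a, -, φ, hφ, hlim⟩ := hK.tendsto_subseq hu
  obtain ⟨N, hN⟩ := Metric.cauchySeq_iff'.1 hlim.cauchySeq ε hε
  exact ⟨φ N, φ (N + 1), hφ N.lt_succ_self, by rw [dist_comm]; exact hN _ N.le_succ⟩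

section Cube

open Function

variable {d : ℕ}

lemma isOpen_cubeInfty (x : EuclideanSpace ℝ (Fin d)) (ρ : ℝ) : IsOpen (cubeInfty x ρ) := by
  simp only [cubeInfty, ofPred_forall]
  exact isOpen_iInter_of_finite fun i => isOpen_lt (by fun_prop) continuous_const

lemma exists_le_abs_sub_of_notMem_cubeInfty {x y : EuclideanSpace ℝ (Fin d)} {ρ : ℝ}
    (h : y ∉ cubeInfty x ρ) : ∃ i, ρ ≤ |y i - x i| := by
  simpa [cubeInfty] using h

lemma le_dist_of_notMem_cubeInfty {x y : EuclideanSpace ℝ (Fin d)} {ρ : ℝ}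
    (h : y ∉ cubeInfty x ρ) : ρ ≤ dist y x := by
  obtain ⟨i, hi⟩ := exists_le_abs_sub_of_notMem_cubeInfty h
  exact hi.trans (PiLp.dist_apply_le y x i)

lemma disjoint_cubeInfty_half_of_notMem {x y : EuclideanSpace ℝ (Fin d)} {a b : ℝ}
    (h : y ∉ cubeInfty x a) (hba : b ≤ a) :
    Disjoint (cubeInfty x (a / 2)) (cubeInfty y (b / 2)) := by
  obtain ⟨i, hi⟩ := exists_le_abs_sub_of_notMem_cubeInfty h
  refine disjoint_left.2 fun z hzx hzy => ?_
  have hxz := hzx i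
  have hyz := hzy i
  have := abs_sub_le (y i) (z i) (x i)
  rw [abs_sub_comm (y i) (z i)] at this
  linarith

lemma mem_cubeInfty_of_sameOrthant {x y z : EuclideanSpace ℝ (Fin d)} {a b : ℝ}
    (hx : z ∈ cubeInfty x a) (hy : z ∈ cubeInfty y b) (hba : b ≤ a)
    (horth : ∀ i, z i ≤ x i ↔ z i ≤ y i) : y ∈ cubeInfty x a := by
  intro i
  have hxi := abs_lt.1 (hx i)
  have hyi := abs_lt.1 (hy i)
  rw [abs_lt]
  by_cases hzx : z i ≤ x i
  · have := (horth i).1 hzx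
    constructor <;> linarith
  · have := mt (horth i).2 hzx
    constructor <;> linarith

variable {ι : Type*} [LinearOrder ι] {y : ι → EuclideanSpace ℝ (Fin d)} {ρ : ι → ℝ}

lemma pairwise_disjoint_cubeInfty_half (hρ : Antitone ρ)
    (hy : ∀ ⦃i j⦄, i < j → y j ∉ cubeInfty (y i) (ρ i)) :
    Pairwise (Disjoint on fun i => cubeInfty (y i) (ρ i / 2)) :=
  (pairwise_disjoint_on _).2 fun _ _ hij =>
    disjoint_cubeInfty_half_of_notMem (hy hij) (hρ hij.le)

lemma card_mem_cubeInfty_le (hρ : Antitone ρ)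
    (hy : ∀ ⦃i j⦄, i < j → y j ∉ cubeInfty (y i) (ρ i)) (z : EuclideanSpace ℝ (Fin d)) :
    Nat.card {i // z ∈ cubeInfty (y i) (ρ i)} ≤ 2 ^ d := by
  let orthant : {i // z ∈ cubeInfty (y i) (ρ i)} → Fin d → Bool :=
    fun i c => decide (z c ≤ y i c)
  have hsame : ∀ i j, i.1 < j.1 → orthant i = orthant j → False := fun i j hij h =>
    hy hij <| mem_cubeInfty_of_sameOrthant i.2 j.2 (hρ hij.le) fun c => by
      simpa [orthant] using congrFun h c
  have hinj : Function.Injective orthant := fun i j h => by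
    by_contra hne
    rcases lt_or_gt_of_ne (Subtype.coe_ne_coe.2 hne) with hij | hji
    · exact hsame i j hij h
    · exact hsame j i hji h.symm
  simpa using Nat.card_le_card_of_injective orthant hinj

end Cube

section Greedy

variable {d : ℕ} (r : EuclideanSpace ℝ (Fin d) → ℝ) (K : Set (EuclideanSpace ℝ (Fin d)))

/-- A maximum point of `r` on `S`; an arbitrary point when there is none. -/
noncomputable def maxPoint (S : Set (EuclideanSpace ℝ (Fin d))) : EuclideanSpace ℝ (Fin d) :=
  Classical.epsilon fun a => a ∈ S ∧ IsMaxOn r S a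

noncomputable def greedyRemainder : ℕ → Set (EuclideanSpace ℝ (Fin d))
  | 0 => K
  | n + 1 =>
    greedyRemainder n \
      cubeInfty (maxPoint r (greedyRemainder n)) (r (maxPoint r (greedyRemainder n)))

noncomputable def greedyCenter (n : ℕ) : EuclideanSpace ℝ (Fin d) :=
  maxPoint r (greedyRemainder r K n)

lemma greedyRemainder_succ (n : ℕ) :
    greedyRemainder r K (n + 1) =
      greedyRemainder r K n \ cubeInfty (greedyCenter r K n) (r (greedyCenter r K n)) :=
  rfl

lemma antitone_greedyRemainder : Antitone (greedyRemainder r K) :=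
  antitone_nat_of_succ_le fun _ => sdiff_subset

lemma greedyRemainder_subset (n : ℕ) : greedyRemainder r K n ⊆ K :=
  antitone_greedyRemainder r K n.zero_le

lemma subset_greedyRemainder_union (n : ℕ) :
    K ⊆ greedyRemainder r K n ∪ ⋃ m < n, cubeInfty (greedyCenter r K m) (r (greedyCenter r K m)) := by
  induction n with
  | zero => simp [greedyRemainder]
  | succ n ih =>
    rw [biUnion_lt_succ, greedyRemainder_succ, ← union_assoc, union_right_comm]
    exact ih.trans (union_subset_union_left _ (subset_sdiff_union _ _))

variable {r K}

lemma isCompact_greedyRemainder (hK : IsCompact K) (n : ℕ) :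
    IsCompact (greedyRemainder r K n) := by
  induction n with
  | zero => exact hK
  | succ n ih => exact ih.diff (isOpen_cubeInfty _ _)

lemma greedyCenter_mem_isMaxOn (hK : IsCompact K) (husc : UpperSemicontinuousOn r K) {n : ℕ}
    (hn : (greedyRemainder r K n).Nonempty) :
    greedyCenter r K n ∈ greedyRemainder r K n ∧
      IsMaxOn r (greedyRemainder r K n) (greedyCenter r K n) :=
  Classical.epsilon_spec <| (husc.mono (greedyRemainder_subset r K n)).exists_isMaxOn hn
    (isCompact_greedyRemainder hK n)

lemma greedyCenter_notMem_cubeInfty (hK : IsCompact K) (husc : UpperSemicontinuousOn r K)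
    {m n : ℕ} (hmn : m < n) (hn : (greedyRemainder r K n).Nonempty) :
    greedyCenter r K n ∉ cubeInfty (greedyCenter r K m) (r (greedyCenter r K m)) := by
  have := antitone_greedyRemainder r K hmn (greedyCenter_mem_isMaxOn hK husc hn).1
  rw [greedyRemainder_succ] at this
  exact this.2

lemma le_r_greedyCenter (hK : IsCompact K) (husc : UpperSemicontinuousOn r K) {m : ℕ}
    (hm : (greedyRemainder r K m).Nonempty) {x : EuclideanSpace ℝ (Fin d)}
    (hx : x ∈ greedyRemainder r K m) : r x ≤ r (greedyCenter r K m) :=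
  (greedyCenter_mem_isMaxOn hK husc hm).2 hx

lemma exists_greedyRemainder_eq_empty (hK : IsCompact K) (hrpos : ∀ x ∈ K, 0 < r x)
    (husc : UpperSemicontinuousOn r K) : ∃ N, greedyRemainder r K N = ∅ := by
  by_contra! hne
  obtain ⟨x, hx⟩ := hK.nonempty_iInter_of_sequence_nonempty_isCompact_isClosed _
    (fun _ => sdiff_subset) hne fun n => (isCompact_greedyRemainder hK n).isClosed
  rw [mem_iInter] at hx
  obtain ⟨m, n, hmn, hdist⟩ := hK.exists_lt_dist_lt
    (fun n => greedyRemainder_subset r K n (greedyCenter_mem_isMaxOn hK husc (hne n)).1)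
    (hrpos x (hx 0))
  have := le_dist_of_notMem_cubeInfty (greedyCenter_notMem_cubeInfty hK husc hmn (hne n))
  rw [dist_comm] at this
  linarith [le_r_greedyCenter hK husc (hne m) (hx m)]

end Greedy

theorem efficient_cube_covering_general {d : ℕ}
    (K : Set (EuclideanSpace ℝ (Fin d))) (hK : IsCompact K)
    (r : EuclideanSpace ℝ (Fin d) → ℝ) (hrpos : ∀ x ∈ K, 0 < r x)
    (husc : UpperSemicontinuousOn r K) :
    ∃ (N : ℕ) (y : Fin N → EuclideanSpace ℝ (Fin d)),
      (∀ i, y i ∈ K) ∧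
      K ⊆ ⋃ i, cubeInfty (y i) (r (y i)) ∧
      (Set.univ : Set (Fin N)).Pairwise
        (fun i j => Disjoint (cubeInfty (y i) (r (y i) / 2)) (cubeInfty (y j) (r (y j) / 2))) ∧
      ∀ z : EuclideanSpace ℝ (Fin d),
        Nat.card {i : Fin N // z ∈ cubeInfty (y i) (r (y i))} ≤ 2 ^ d := by
  classical
  have hstop := exists_greedyRemainder_eq_empty hK hrpos husc
  have hne (i : Fin (Nat.find hstop)) : (greedyRemainder r K i).Nonempty :=
    nonempty_iff_ne_empty.2 (Nat.find_min hstop i.2)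
  let y (i : Fin (Nat.find hstop)) := greedyCenter r K i
  have hρ : Antitone fun i => r (y i) := fun i j hij =>
    le_r_greedyCenter hK husc (hne i)
      (antitone_greedyRemainder r K hij (greedyCenter_mem_isMaxOn hK husc (hne j)).1)
  have hout : ∀ ⦃i j⦄, i < j → y j ∉ cubeInfty (y i) (r (y i)) := fun i j hij =>
    greedyCenter_notMem_cubeInfty hK husc hij (hne j)
  refine ⟨Nat.find hstop, y,
    fun i => greedyRemainder_subset r K i (greedyCenter_mem_isMaxOn hK husc (hne i)).1,
    fun x hx => ?_, pairwise_univ.2 (pairwise_disjoint_cubeInfty_half hρ hout),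
    card_mem_cubeInfty_le hρ hout⟩
  have := subset_greedyRemainder_union r K (Nat.find hstop) hx
  rw [Nat.find_spec hstop, empty_union, mem_iUnion₂] at this
  obtain ⟨m, hm, hxm⟩ := this
  exact mem_iUnion.2 ⟨⟨m, hm⟩, hxm⟩

/-- Efficient covering of a compact set by cubes whose radii are prescribed by an upper
semi-continuous positive function: the cubes cover `K`, the half-cubes are pairwise
disjoint, and every point of `ℝ^d` lies in at most `2^d` of the cubes. -/
theorem efficient_cube_covering {d : ℕ} (hd : 0 < d)
    (K : Set (EuclideanSpace ℝ (Fin d))) (hK : IsCompact K) (hne : K.Nonempty)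
    (r : EuclideanSpace ℝ (Fin d) → ℝ) (hrpos : ∀ x ∈ K, 0 < r x)
    (husc : UpperSemicontinuousOn r K) :
    ∃ (N : ℕ) (y : Fin N → EuclideanSpace ℝ (Fin d)),
      (∀ i, y i ∈ K) ∧
      K ⊆ ⋃ i, cubeInfty (y i) (r (y i)) ∧
      (Set.univ : Set (Fin N)).Pairwise
        (fun i j => Disjoint (cubeInfty (y i) (r (y i) / 2)) (cubeInfty (y j) (r (y j) / 2))) ∧
      ∀ z : EuclideanSpace ℝ (Fin d),
        Nat.card {i : Fin N // z ∈ cubeInfty (y i) (r (y i))} ≤ 2 ^ d :=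
  efficient_cube_covering_general K hK r hrpos husc
end

section
/- Let Ω ⊂ ℝ^d be a bounded nonempty open set and 0 < γ ≤ ∞. Then there exists a constant c > 0 (depending on Ω, d, γ) such that for every n ∈ ℕ and every finite set P ⊂ ℝ^d with |P| ≤ n, one has ‖dist(·, P)‖_{L_γ(Ω)} ≥ c n^{−1/d}. -/
/-!
The `r`-neighbourhood of `n` points is covered by `n` balls of radius `r`, of total volume
`n r^d |B₁|`. For `r = c₀ n^{-1/d}` this is `c₀^d |B₁|`, which is at most `|Ω|/2` once `c₀` is
small. So on at least half of `Ω` the distance to `P` is `≥ r`, and the `L_γ` norm is at least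
`r (|Ω|/2)^{1/γ}`.
-/

open Metric Set MeasureTheory Filter Topology Module
open scoped ENNReal Finset

-- Also covers `p = ∞`, where `1 / p.toReal = 0` so that `μ s` contributes the factor `1`.
theorem ofReal_mul_measure_rpow_le_eLpNorm {α F : Type*} [MeasurableSpace α] [NormedAddCommGroup F]
    {μ : Measure α} {p : ℝ≥0∞} {f : α → F} {s : Set α} {r : ℝ}
    (hs : MeasurableSet s) (hμs : μ s ≠ 0) (hp : p ≠ 0) (hr : 0 ≤ r)
    (hf : ∀ x ∈ s, r ≤ ‖f x‖) :
    ENNReal.ofReal r * μ s ^ (1 / p.toReal) ≤ eLpNorm f p μ := by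
  rw [← Real.enorm_eq_ofReal hr, ← eLpNorm_indicator_const' hs hμs hp]
  refine eLpNorm_mono fun x => ?_
  by_cases hx : x ∈ s
  · simpa [hx, abs_of_nonneg hr] using hf x hx
  · simp [hx]

theorem ofReal_mul_rpow_le_eLpNorm_infDist {X : Type*} [PseudoMetricSpace X] [MeasurableSpace X]
    [OpensMeasurableSpace X] {μ : Measure X} {Ω s : Set X} {p : ℝ≥0∞} {r : ℝ}
    (hΩ : MeasurableSet Ω) (hμΩ : μ Ω ≠ 0) (hμΩ' : μ Ω ≠ ∞) (hs : s.Nonempty) (hp : p ≠ 0)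
    (hr : 0 ≤ r) (hthick : μ (thickening r s) ≤ μ Ω / 2) :
    ENNReal.ofReal r * (μ Ω / 2) ^ (1 / p.toReal) ≤
      eLpNorm (fun x => infDist x s) p (μ.restrict Ω) := by
  set S := Ω \ thickening r s
  have hS : MeasurableSet S := hΩ.diff isOpen_thickening.measurableSet
  have hhalf : μ Ω / 2 ≤ μ S :=
    calc μ Ω / 2 = μ Ω - μ Ω / 2 := (ENNReal.sub_half hμΩ').symm
      _ ≤ μ Ω - μ (thickening r s) := tsub_le_tsub_left hthick _
      _ ≤ μ S := le_measure_sdiff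
  have hSΩ : μ.restrict Ω S = μ S := by rw [Measure.restrict_apply hS, inter_eq_left.2 sdiff_subset]
  have hS0 : μ.restrict Ω S ≠ 0 := by
    rw [hSΩ]; exact ((ENNReal.half_pos hμΩ).trans_le hhalf).ne'
  have hfar : ∀ x ∈ S, r ≤ ‖infDist x s‖ := fun x hx => by
    rw [Real.norm_of_nonneg infDist_nonneg]
    exact not_lt.1 fun h => hx.2 ((mem_thickening_iff_infDist_lt hs).2 h)
  calc ENNReal.ofReal r * (μ Ω / 2) ^ (1 / p.toReal)
      ≤ ENNReal.ofReal r * μ.restrict Ω S ^ (1 / p.toReal) := by rw [hSΩ]; gcongr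
    _ ≤ _ := ofReal_mul_measure_rpow_le_eLpNorm hS hS0 hp hr hfar

theorem mul_mul_rpow_neg_inv_pow {x : ℝ} (hx : 0 < x) (c : ℝ) {d : ℕ} (hd : d ≠ 0) :
    x * (c * x ^ (-(1 : ℝ) / d)) ^ d = c ^ d := by
  rw [mul_pow, ← Real.rpow_natCast (x ^ _), ← Real.rpow_mul hx.le,
    div_mul_cancel₀ _ (Nat.cast_ne_zero.2 hd), Real.rpow_neg_one]
  field_simp

section AddHaar

variable {E : Type*} [NormedAddCommGroup E] [NormedSpace ℝ E] [MeasurableSpace E] [BorelSpace E]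
  [FiniteDimensional ℝ E] [Nontrivial E] (μ : Measure E) [μ.IsAddHaarMeasure]

theorem measure_thickening_finset_le (P : Finset E) {r : ℝ} (hr : 0 ≤ r) :
    μ (thickening r (P : Set E)) ≤ #P * (ENNReal.ofReal (r ^ finrank ℝ E) * μ (ball 0 1)) := by
  rw [thickening_eq_biUnion_ball]
  calc μ (⋃ p ∈ (P : Set E), ball p r) ≤ ∑ p ∈ P, μ (ball p r) := measure_biUnion_finset_le P _
    _ = _ := by simp [Measure.addHaar_ball μ _ hr]

theorem measure_thickening_finset_le_of_card_le {P : Finset E} {n : ℕ} (hcard : #P ≤ n)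
    (hn : 0 < n) {c : ℝ} (hc : 0 ≤ c) :
    μ (thickening (c * (n : ℝ) ^ (-(1 : ℝ) / finrank ℝ E)) (P : Set E)) ≤
      ENNReal.ofReal (c ^ finrank ℝ E) * μ (ball 0 1) := by
  set r := c * (n : ℝ) ^ (-(1 : ℝ) / finrank ℝ E)
  have hnR : (0 : ℝ) < n := Nat.cast_pos.2 hn
  calc μ (thickening r (P : Set E)) ≤ #P * (ENNReal.ofReal (r ^ finrank ℝ E) * μ (ball 0 1)) :=
        measure_thickening_finset_le μ P (by positivity)
    _ ≤ n * (ENNReal.ofReal (r ^ finrank ℝ E) * μ (ball 0 1)) := by gcongr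
    _ = ENNReal.ofReal (c ^ finrank ℝ E) * μ (ball 0 1) := by
        rw [← mul_assoc, ← ENNReal.ofReal_natCast, ← ENNReal.ofReal_mul hnR.le,
          mul_mul_rpow_neg_inv_pow hnR c finrank_pos.ne']

end AddHaar

theorem exists_pos_ofReal_pow_mul_lt {a b : ℝ≥0∞} (ha : a ≠ 0) (hb : b ≠ ∞) {d : ℕ} (hd : d ≠ 0) :
    ∃ c : ℝ, 0 < c ∧ ENNReal.ofReal (c ^ d) * b < a := by
  have hpow : Tendsto (fun c : ℝ => ENNReal.ofReal (c ^ d)) (𝓝 0) (𝓝 0) := by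
    simpa using ENNReal.tendsto_ofReal ((continuous_pow d).tendsto' 0 0 (zero_pow hd))
  have hlim : Tendsto (fun c : ℝ => ENNReal.ofReal (c ^ d) * b) (𝓝[>] 0) (𝓝 0) := by
    simpa using (ENNReal.Tendsto.mul_const hpow (Or.inr hb)).mono_left nhdsWithin_le_nhds
  obtain ⟨c, hc, hcpos⟩ :=
    ((hlim.eventually (gt_mem_nhds ha.bot_lt)).and self_mem_nhdsWithin).exists
  exact ⟨c, hcpos, hc⟩

/-- Lower bound for the `L_γ(Ω)`-norm (`0 < γ ≤ ∞`) of the distance function of any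
`n`-point set: it is at least a constant times `n^{-1/d}`. -/
theorem distFun_eLpNorm_lower_bound {d : ℕ} (hd : 0 < d)
    (Ω : Set (EuclideanSpace ℝ (Fin d))) (hΩb : Bornology.IsBounded Ω)
    (hΩo : IsOpen Ω) (hne : Ω.Nonempty) (γ : ℝ≥0∞) (hγ : 0 < γ) :
    ∃ c : ℝ, 0 < c ∧ ∀ (n : ℕ) (P : Finset (EuclideanSpace ℝ (Fin d))),
      P.Nonempty → P.card ≤ n →
      ENNReal.ofReal (c * (n : ℝ) ^ (-(1 : ℝ) / d)) ≤
        eLpNorm (fun x => Metric.infDist x (↑P : Set (EuclideanSpace ℝ (Fin d)))) γ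
          (volume.restrict Ω) := by
  have : Nonempty (Fin d) := Fin.pos_iff_nonempty.mp hd
  have hV0 : volume Ω ≠ 0 := (hΩo.measure_pos volume hne).ne'
  have hVtop : volume Ω ≠ ∞ := hΩb.measure_lt_top.ne
  have hhalf_top : volume Ω / 2 ≠ ∞ := (ENNReal.div_lt_top hVtop two_ne_zero).ne
  set B := volume (ball (0 : EuclideanSpace ℝ (Fin d)) 1)
  have hB : B ≠ ∞ := measure_ball_lt_top.ne
  obtain ⟨c₀, hc₀, hc₀B⟩ := exists_pos_ofReal_pow_mul_lt (ENNReal.half_pos hV0).ne' hB hd.ne'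
  set κ := (volume Ω / 2) ^ (1 / γ.toReal)
  have hκtop : κ ≠ ∞ := ENNReal.rpow_ne_top_of_nonneg (by positivity) hhalf_top
  have hκ : 0 < κ.toReal :=
    ENNReal.toReal_pos (ENNReal.rpow_pos (ENNReal.half_pos hV0) hhalf_top).ne' hκtop
  refine ⟨c₀ * κ.toReal, mul_pos hc₀ hκ, fun n P hP hcard => ?_⟩
  set r := c₀ * (n : ℝ) ^ (-(1 : ℝ) / d)
  have hr : 0 ≤ r := by positivity
  have hthick : volume (thickening r (P : Set (EuclideanSpace ℝ (Fin d)))) ≤ volume Ω / 2 := by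
    have := measure_thickening_finset_le_of_card_le volume hcard (hP.card_pos.trans_le hcard) hc₀.le
    rw [finrank_euclideanSpace_fin] at this
    exact this.trans hc₀B.le
  calc ENNReal.ofReal (c₀ * κ.toReal * (n : ℝ) ^ (-(1 : ℝ) / d)) = ENNReal.ofReal r * κ := by
        rw [mul_right_comm, ENNReal.ofReal_mul hr, ENNReal.ofReal_toReal hκtop]
    _ ≤ _ := ofReal_mul_rpow_le_eLpNorm_infDist hΩo.measurableSet hV0 hVtop
        (by exact_mod_cast hP) hγ.ne' hr hthick
end

section
/- Let K ⊂ ℝ^d be compact and P ⊂ K a finite nonempty set with covering radius h = sup_{x∈K} dist(x, P). Then there exists a subset X ⊆ P such that sup_{x∈K} dist(x, X) ≤ 2h and the separation distance satisfies (1/2) min_{x ≠ y ∈ X} ‖x − y‖₂ ≥ h/2. -/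
/-!
Take a maximal `h`-separated subset `X` of `P`. By maximality every point of `P` lies within `h`
of `X`, and every point of `K` lies within `h` of `P`, so the triangle inequality puts every point
of `K` within `2h` of `X`.
-/

open Metric Set

open scoped NNReal ENNReal

variable {α : Type*}

theorem Set.Finite.exists_isSeparated_isCover [PseudoEMetricSpace α] {s : Set α}
    (hs : s.Finite) (ε : ℝ≥0) : ∃ N ⊆ s, IsSeparated ε N ∧ IsCover ε s N := by
  obtain ⟨N, hN⟩ := (hs.finite_subsets.inter_of_left {N | IsSeparated ε N}).exists_maximal
    ⟨∅, empty_subset s, IsSeparated.empty⟩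
  exact ⟨N, hN.prop.1, hN.prop.2, .of_maximal_isSeparated hN⟩

namespace Metric

variable [PseudoMetricSpace α]

theorem IsSeparated.lt_dist {ε : ℝ≥0} {s : Set α} (hs : IsSeparated ε s) {x y : α}
    (hx : x ∈ s) (hy : y ∈ s) (hxy : x ≠ y) : (ε : ℝ) < dist x y := by
  have : (ε : ℝ≥0∞) < edist x y := hs hx hy hxy
  rw [edist_nndist, ENNReal.coe_lt_coe] at this
  exact_mod_cast this

theorem IsCover.infDist_le {ε : ℝ≥0} {s N : Set α} (hN : IsCover ε s N) {x : α} (hx : x ∈ s) :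
    infDist x N ≤ ε := by
  obtain ⟨y, hyN, hxy⟩ := mem_iUnion₂.mp (hN.subset_iUnion_closedBall hx)
  exact (infDist_le_dist_of_mem hyN).trans hxy

theorem infDist_le_infDist_add_of_forall_infDist_le {s t : Set α} (hs : s.Nonempty) {b : ℝ}
    (h : ∀ y ∈ s, infDist y t ≤ b) (x : α) : infDist x t ≤ infDist x s + b := by
  have : infDist x t - b ≤ infDist x s := (le_infDist hs).mpr fun y hy => by
    linarith [infDist_le_infDist_add_dist (x := x) (y := y) (s := t), h y hy]
  linarith

theorem infDist_le_iSup_infDist {K s : Set α} (hK : Bornology.IsBounded K) (hs : s.Nonempty)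
    {x : α} (hx : x ∈ K) : infDist x s ≤ ⨆ y ∈ K, infDist y s := by
  obtain ⟨z, hz⟩ := hs
  obtain ⟨R, hR⟩ := hK.subset_closedBall z
  have hbdd : BddAbove (range fun y => ⨆ _ : y ∈ K, infDist y s) := by
    refine ⟨max R 0, forall_mem_range.mpr fun y => Real.iSup_le (fun hy => ?_) (le_max_right _ _)⟩
    exact ((infDist_le_dist_of_mem hz).trans (hR hy)).trans (le_max_left _ _)
  exact (ciSup_pos hx).symm.le.trans (le_ciSup hbdd x)

end Metric

theorem exists_separated_subcover_general {d : ℕ}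
    (K : Set (EuclideanSpace ℝ (Fin d))) (hK : IsCompact K)
    (P : Finset (EuclideanSpace ℝ (Fin d))) (hPne : P.Nonempty)
    (h : ℝ) (hh : h = ⨆ x ∈ K, Metric.infDist x (↑P : Set (EuclideanSpace ℝ (Fin d)))) :
    ∃ X : Finset (EuclideanSpace ℝ (Fin d)), X ⊆ P ∧ X.Nonempty ∧
      (∀ x ∈ K, Metric.infDist x (↑X : Set (EuclideanSpace ℝ (Fin d))) ≤ 2 * h) ∧
      (∀ x ∈ X, ∀ y ∈ X, x ≠ y → h / 2 ≤ (1 / 2) * ‖x - y‖) := by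
  have hP : (P : Set (EuclideanSpace ℝ (Fin d))).Nonempty := hPne
  have hKP : ∀ x ∈ K, infDist x P ≤ h := fun x hx => hh ▸ infDist_le_iSup_infDist hK.isBounded hP hx
  have h0 : 0 ≤ h := hh ▸ Real.iSup_nonneg fun _ => Real.iSup_nonneg fun _ => infDist_nonneg
  obtain ⟨N, hNP, hsep, hcov⟩ := P.finite_toSet.exists_isSeparated_isCover h.toNNReal
  have hε : (h.toNNReal : ℝ) = h := Real.coe_toNNReal h h0
  lift N to Finset (EuclideanSpace ℝ (Fin d)) using P.finite_toSet.subset hNP with X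
  refine ⟨X, Finset.coe_subset.mp hNP, Finset.coe_nonempty.mp (hcov.nonempty hP),
    fun x hx => ?_, fun x hx y hy hxy => ?_⟩
  · calc infDist x X ≤ infDist x P + h :=
          infDist_le_infDist_add_of_forall_infDist_le hP (fun p hp => hε ▸ hcov.infDist_le hp) x
      _ ≤ 2 * h := by linarith [hKP x hx]
  · have := hsep.lt_dist hx hy hxy
    rw [hε, dist_eq_norm] at this
    linarith

/-- From any finite set `P` in a compact set `K` with covering radius `h` one can extract a
subset `X` with covering radius at most `2h` and separation distance at least `h/2`. -/
theorem exists_separated_subcover {d : ℕ} (hd : 0 < d)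
    (K : Set (EuclideanSpace ℝ (Fin d))) (hK : IsCompact K) (hKne : K.Nonempty)
    (P : Finset (EuclideanSpace ℝ (Fin d))) (hPne : P.Nonempty)
    (hPK : (↑P : Set (EuclideanSpace ℝ (Fin d))) ⊆ K)
    (h : ℝ) (hh : h = ⨆ x ∈ K, Metric.infDist x (↑P : Set (EuclideanSpace ℝ (Fin d)))) :
    ∃ X : Finset (EuclideanSpace ℝ (Fin d)), X ⊆ P ∧ X.Nonempty ∧
      (∀ x ∈ K, Metric.infDist x (↑X : Set (EuclideanSpace ℝ (Fin d))) ≤ 2 * h) ∧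
      (∀ x ∈ X, ∀ y ∈ X, x ≠ y → h / 2 ≤ (1 / 2) * ‖x - y‖) :=
  exists_separated_subcover_general K hK P hPne h hh
end

section
/- Let Ω ⊂ ℝ^d be a bounded open set and P ⊂ Ω finite with c ∈ (0,1) fixed. For x ∈ closure(Ω), suppose there exists ρ ∈ (0, r) with sup_{y ∈ Ω ∩ B^∞(x, ρ)} dist(y, P) < c ρ, and define r_P(x) as the infimum of all such ρ. Then r_P(x) > 0 and the function r_P : closure(Ω) → (0, ∞) is upper semi-continuous. -/
open Metric Set

/-!
Write `g(x, ρ)` (`cubeDistSup`) for the supremum of `dist(·, P)` over `Ω ∩ B^∞(x, ρ)`, so that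
`r_P(x)` is the infimum of the good radii: those `ρ ∈ (0, r)` with `g(x, ρ) < c ρ`.

Positivity: near any `x ∈ closure Ω` we have `ρ ≤ g(x, ρ)` for all small `ρ`, which rules out
small good radii since `c < 1`. If `x ∉ Ω`, then `x ∉ P` and this holds for `ρ ≤ dist(x, P)`,
because `dist(x, P) ≤ g(x, ρ)`. If `x ∈ Ω`, then for `s < ρ` small the points at distance `s`
from `x` lie in `Ω ∩ B^∞(x, ρ)`, and some of them are at distance `≥ s` from the finite set `P`.

Upper semicontinuity: if `ρ` is good at `x`, so is a slightly smaller `ρ'` with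
`g(x, ρ) < c ρ'`, and `B^∞(x', ρ') ⊆ B^∞(x, ρ)` for `x'` close to `x` makes `ρ'` good at `x'`.
-/

section RealSup

variable {α : Type*} {f : α → ℝ} {S T : Set α}

theorem le_biSup_of_bddAbove (hf : BddAbove (f '' S)) {y : α} (hy : y ∈ S) :
    f y ≤ ⨆ z ∈ S, f z :=
  le_ciSup₂ (f := fun z (_ : z ∈ S) => f z)
    (hf.mono (iUnion_subset fun _ => range_subset_iff.2 fun hz => mem_image_of_mem f hz)) y hy

theorem biSup_nonneg (hf : ∀ y, 0 ≤ f y) : 0 ≤ ⨆ z ∈ S, f z :=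
  Real.iSup_nonneg fun z => Real.iSup_nonneg fun _ => hf z

theorem biSup_mono_of_nonneg (hf : BddAbove (f '' S)) (hf0 : ∀ y, 0 ≤ f y) (hTS : T ⊆ S) :
    ⨆ z ∈ T, f z ≤ ⨆ z ∈ S, f z :=
  Real.iSup_le (fun _ => Real.iSup_le (fun hz => le_biSup_of_bddAbove hf (hTS hz))
    (biSup_nonneg hf0)) (biSup_nonneg hf0)

end RealSup

theorem exists_dist_eq_forall_le_dist_of_finite {E : Type*} [NormedAddCommGroup E]
    [NormedSpace ℝ E] [Nontrivial E] {P : Set E} (hP : P.Finite) (x : E) :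
    ∃ δ > 0, ∀ s, 0 ≤ s → s ≤ δ → ∃ y, dist y x = s ∧ ∀ p ∈ P, s ≤ dist y p := by
  obtain ⟨ε, hε, hball⟩ :=
    Metric.isOpen_iff.mp (hP.sdiff (t := {x})).isClosed.isOpen_compl x fun hx => hx.2 rfl
  refine ⟨ε / 2, half_pos hε, fun s hs0 hsδ => ?_⟩
  obtain ⟨v, hv⟩ := exists_norm_eq E hs0
  have hyx : dist (x + v) x = s := by rw [dist_self_add_left, hv]
  refine ⟨x + v, hyx, fun p hp => ?_⟩
  rcases eq_or_ne p x with rfl | hpx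
  · exact hyx.ge
  · have hεp : ε ≤ dist p x := not_lt.mp fun h => hball h ⟨hp, hpx⟩
    linarith [dist_triangle p (x + v) x, dist_comm p (x + v)]

variable {d : ℕ}

theorem abs_sub_apply_le_dist (y x : EuclideanSpace ℝ (Fin d)) (i : Fin d) :
    |y i - x i| ≤ dist y x :=
  PiLp.dist_apply_le y x i

theorem ball_subset_cubeInfty (x : EuclideanSpace ℝ (Fin d)) (ρ : ℝ) :
    ball x ρ ⊆ cubeInfty x ρ :=
  fun y hy i => (abs_sub_apply_le_dist y x i).trans_lt hy

theorem cubeInfty_subset_cubeInfty {x x' : EuclideanSpace ℝ (Fin d)} {ρ ρ' : ℝ}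
    (h : dist x' x < ρ - ρ') : cubeInfty x' ρ' ⊆ cubeInfty x ρ := fun y hy i =>
  calc |y i - x i| ≤ |y i - x' i| + |x' i - x i| := abs_sub_le _ _ _
    _ < ρ' + (ρ - ρ') :=
      add_lt_add_of_lt_of_le (hy i) ((abs_sub_apply_le_dist x' x i).trans h.le)
    _ = ρ := add_sub_cancel _ _

noncomputable def cubeDistSup (Ω P : Set (EuclideanSpace ℝ (Fin d)))
    (x : EuclideanSpace ℝ (Fin d)) (ρ : ℝ) : ℝ :=
  ⨆ y ∈ Ω ∩ cubeInfty x ρ, infDist y P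

def goodRadii (Ω P : Set (EuclideanSpace ℝ (Fin d))) (c r : ℝ)
    (x : EuclideanSpace ℝ (Fin d)) : Set ℝ :=
  {ρ | ρ ∈ Ioo 0 r ∧ cubeDistSup Ω P x ρ < c * ρ}

section CubeDistSup

variable {Ω P : Set (EuclideanSpace ℝ (Fin d))}

theorem cubeDistSup_nonneg (x : EuclideanSpace ℝ (Fin d)) (ρ : ℝ) :
    0 ≤ cubeDistSup Ω P x ρ :=
  biSup_nonneg fun _ => infDist_nonneg

theorem bddAbove_infDist_image (hΩ : Bornology.IsBounded Ω)
    (P : Set (EuclideanSpace ℝ (Fin d))) : BddAbove ((infDist · P) '' Ω) :=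
  (lipschitz_infDist_pt P).isBounded_image hΩ |>.bddAbove

theorem infDist_le_cubeDistSup (hΩ : Bornology.IsBounded Ω) {x y : EuclideanSpace ℝ (Fin d)}
    {ρ : ℝ} (hy : y ∈ Ω ∩ cubeInfty x ρ) : infDist y P ≤ cubeDistSup Ω P x ρ :=
  le_biSup_of_bddAbove ((bddAbove_infDist_image hΩ P).mono (image_mono inter_subset_left)) hy

theorem cubeDistSup_mono (hΩ : Bornology.IsBounded Ω) {x x' : EuclideanSpace ℝ (Fin d)}
    {ρ ρ' : ℝ} (h : cubeInfty x' ρ' ⊆ cubeInfty x ρ) :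
    cubeDistSup Ω P x' ρ' ≤ cubeDistSup Ω P x ρ :=
  biSup_mono_of_nonneg ((bddAbove_infDist_image hΩ P).mono (image_mono inter_subset_left))
    (fun _ => infDist_nonneg) (inter_subset_inter_right Ω h)

theorem infDist_le_cubeDistSup_of_mem_closure (hΩ : Bornology.IsBounded Ω)
    {x : EuclideanSpace ℝ (Fin d)} (hx : x ∈ closure Ω) {ρ : ℝ} (hρ : 0 < ρ) :
    infDist x P ≤ cubeDistSup Ω P x ρ := by
  refine le_of_forall_pos_lt_add fun ε hε => ?_
  obtain ⟨y, hyΩ, hxy⟩ := Metric.mem_closure_iff.mp hx _ (lt_min hε hρ)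
  have hyx : y ∈ ball x ρ := by
    rw [mem_ball, dist_comm]
    exact hxy.trans_le (min_le_right _ _)
  calc infDist x P ≤ infDist y P + dist x y := infDist_le_infDist_add_dist
    _ < cubeDistSup Ω P x ρ + ε :=
      add_lt_add_of_le_of_lt (infDist_le_cubeDistSup hΩ ⟨hyΩ, ball_subset_cubeInfty x ρ hyx⟩)
        (hxy.trans_le (min_le_left _ _))

theorem exists_pos_forall_le_cubeDistSup_of_mem (hd : 0 < d) (hΩb : Bornology.IsBounded Ω)
    (hΩo : IsOpen Ω) (hP : P.Finite) (hPne : P.Nonempty) {x : EuclideanSpace ℝ (Fin d)}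
    (hx : x ∈ Ω) : ∃ b > 0, ∀ ρ ∈ Ioo 0 b, ρ ≤ cubeDistSup Ω P x ρ := by
  have : Nonempty (Fin d) := ⟨⟨0, hd⟩⟩
  obtain ⟨t, ht, hball⟩ := Metric.isOpen_iff.mp hΩo x hx
  obtain ⟨δ, hδ, hfar⟩ := exists_dist_eq_forall_le_dist_of_finite hP x
  refine ⟨min t δ, lt_min ht hδ, fun ρ hρ => le_of_forall_lt_imp_le_of_dense fun s hs => ?_⟩
  rcases le_or_gt s 0 with hs0 | hs0
  · exact hs0.trans (cubeDistSup_nonneg x ρ)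
  obtain ⟨y, hyx, hyP⟩ := hfar s hs0.le (hs.le.trans (hρ.2.le.trans (min_le_right _ _)))
  have hyρ : y ∈ ball x ρ := by rw [mem_ball, hyx]; exact hs
  have hyΩ : y ∈ Ω := hball (ball_subset_ball (hρ.2.le.trans (min_le_left _ _)) hyρ)
  calc s ≤ infDist y P := (le_infDist hPne).mpr hyP
    _ ≤ cubeDistSup Ω P x ρ := infDist_le_cubeDistSup hΩb ⟨hyΩ, ball_subset_cubeInfty x ρ hyρ⟩

theorem exists_pos_forall_le_cubeDistSup (hd : 0 < d) (hΩb : Bornology.IsBounded Ω)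
    (hΩo : IsOpen Ω) (hP : P.Finite) (hPne : P.Nonempty) (hPΩ : P ⊆ Ω)
    {x : EuclideanSpace ℝ (Fin d)} (hx : x ∈ closure Ω) :
    ∃ b > 0, ∀ ρ ∈ Ioo 0 b, ρ ≤ cubeDistSup Ω P x ρ := by
  by_cases hxΩ : x ∈ Ω
  · exact exists_pos_forall_le_cubeDistSup_of_mem hd hΩb hΩo hP hPne hxΩ
  · have hxP : 0 < infDist x P :=
      (hP.isClosed.notMem_iff_infDist_pos hPne).mp fun h => hxΩ (hPΩ h)
    exact ⟨infDist x P, hxP, fun ρ hρ =>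
      hρ.2.le.trans (infDist_le_cubeDistSup_of_mem_closure hΩb hx hρ.1)⟩

theorem le_sInf_goodRadii {c r b : ℝ} (hc : c ≤ 1) {x : EuclideanSpace ℝ (Fin d)}
    (hne : (goodRadii Ω P c r x).Nonempty) (hb : ∀ ρ ∈ Ioo 0 b, ρ ≤ cubeDistSup Ω P x ρ) :
    b ≤ sInf (goodRadii Ω P c r x) := by
  refine le_csInf hne fun ρ ⟨hρr, hρ⟩ => not_lt.mp fun hρb => ?_
  have := (hb ρ ⟨hρr.1, hρb⟩).trans_lt hρ
  nlinarith [hρr.1]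

theorem eventually_mem_goodRadii (hΩ : Bornology.IsBounded Ω) {c r ρ : ℝ}
    {x : EuclideanSpace ℝ (Fin d)} (hρ : ρ ∈ goodRadii Ω P c r x) :
    ∃ ρ' < ρ, ∀ᶠ x' in nhds x, ρ' ∈ goodRadii Ω P c r x' := by
  obtain ⟨⟨hρ0, hρr⟩, hg⟩ := hρ
  have hg0 := cubeDistSup_nonneg (Ω := Ω) (P := P) x ρ
  have hc : 0 < c := (mul_pos_iff_of_pos_right hρ0).mp (hg0.trans_lt hg)
  obtain ⟨ρ', hgρ', hρ'ρ⟩ := exists_between ((div_lt_iff₀' hc).mpr hg)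
  refine ⟨ρ', hρ'ρ, Filter.eventually_of_mem (ball_mem_nhds x (sub_pos.mpr hρ'ρ)) ?_⟩
  refine fun x' hx' => ⟨⟨(div_nonneg hg0 hc.le).trans_lt hgρ', hρ'ρ.trans hρr⟩, ?_⟩
  calc cubeDistSup Ω P x' ρ' ≤ cubeDistSup Ω P x ρ :=
        cubeDistSup_mono hΩ (cubeInfty_subset_cubeInfty (mem_ball.mp hx'))
    _ < c * ρ' := (div_lt_iff₀' hc).mp hgρ'

theorem upperSemicontinuousAt_sInf_goodRadii (hΩ : Bornology.IsBounded Ω) {c r : ℝ}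
    {x : EuclideanSpace ℝ (Fin d)} (hne : (goodRadii Ω P c r x).Nonempty) :
    UpperSemicontinuousAt (fun x => sInf (goodRadii Ω P c r x)) x := fun t ht => by
  obtain ⟨ρ, hρ, hρt⟩ := exists_lt_of_csInf_lt hne ht
  obtain ⟨ρ', hρ'ρ, hρ'⟩ := eventually_mem_goodRadii hΩ hρ
  filter_upwards [hρ'] with x' hx'
  exact (csInf_le ⟨0, fun _ h => h.1.1.le⟩ hx').trans_lt (hρ'ρ.trans hρt)

end CubeDistSup

theorem rP_pos_and_upperSemicontinuous_general {d : ℕ} (hd : 0 < d)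
    (Ω : Set (EuclideanSpace ℝ (Fin d))) (hΩb : Bornology.IsBounded Ω) (hΩo : IsOpen Ω)
    (P : Finset (EuclideanSpace ℝ (Fin d))) (hPne : P.Nonempty)
    (hPΩ : (↑P : Set (EuclideanSpace ℝ (Fin d))) ⊆ Ω)
    (c : ℝ) (hc : c ∈ Set.Ioo (0 : ℝ) 1) (r : ℝ)
    (rP : EuclideanSpace ℝ (Fin d) → ℝ)
    (hrP : ∀ x, rP x = sInf {ρ : ℝ | ρ ∈ Set.Ioo 0 r ∧
      (⨆ y ∈ Ω ∩ cubeInfty x ρ,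
        Metric.infDist y (↑P : Set (EuclideanSpace ℝ (Fin d)))) < c * ρ})
    (hne : ∀ x ∈ closure Ω, ∃ ρ ∈ Set.Ioo (0 : ℝ) r,
      (⨆ y ∈ Ω ∩ cubeInfty x ρ,
        Metric.infDist y (↑P : Set (EuclideanSpace ℝ (Fin d)))) < c * ρ) :
    (∀ x ∈ closure Ω, 0 < rP x) ∧ UpperSemicontinuousOn rP (closure Ω) := by
  obtain rfl : rP = fun x => sInf (goodRadii Ω P c r x) := funext hrP
  refine ⟨fun x hx => ?_, fun x hx =>
    (upperSemicontinuousAt_sInf_goodRadii hΩb (hne x hx)).upperSemicontinuousWithinAt _⟩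
  obtain ⟨b, hb, hbx⟩ :=
    exists_pos_forall_le_cubeDistSup hd hΩb hΩo P.finite_toSet hPne.to_set hPΩ hx
  exact hb.trans_le (le_sInf_goodRadii hc.2.le (hne x hx) hbx)

/-- The radius function `r_P` of good cubes is positive and upper semi-continuous on the
closure of `Ω`. -/
theorem rP_pos_and_upperSemicontinuous {d : ℕ} (hd : 0 < d)
    (Ω : Set (EuclideanSpace ℝ (Fin d))) (hΩb : Bornology.IsBounded Ω) (hΩo : IsOpen Ω)
    (P : Finset (EuclideanSpace ℝ (Fin d))) (hPne : P.Nonempty)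
    (hPΩ : (↑P : Set (EuclideanSpace ℝ (Fin d))) ⊆ Ω)
    (c : ℝ) (hc : c ∈ Set.Ioo (0 : ℝ) 1) (r : ℝ) (hr : 0 < r)
    (rP : EuclideanSpace ℝ (Fin d) → ℝ)
    (hrP : ∀ x, rP x = sInf {ρ : ℝ | ρ ∈ Set.Ioo 0 r ∧
      (⨆ y ∈ Ω ∩ cubeInfty x ρ,
        Metric.infDist y (↑P : Set (EuclideanSpace ℝ (Fin d)))) < c * ρ})
    (hne : ∀ x ∈ closure Ω, ∃ ρ ∈ Set.Ioo (0 : ℝ) r,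
      (⨆ y ∈ Ω ∩ cubeInfty x ρ,
        Metric.infDist y (↑P : Set (EuclideanSpace ℝ (Fin d)))) < c * ρ) :
    (∀ x ∈ closure Ω, 0 < rP x) ∧ UpperSemicontinuousOn rP (closure Ω) :=
  rP_pos_and_upperSemicontinuous_general hd Ω hΩb hΩo P hPne hPΩ c hc r rP hrP hne
end

section
/- Let Ω ⊂ ℝ^d be a bounded open set satisfying an interior cone condition. Then there exists a constant c_Ω > 0 such that for every x ∈ Ω and every ρ with 0 < ρ ≤ 1 + sup_{y ∈ Ω} ‖y‖₂, one has vol(B(x, ρ) ∩ Ω) ≥ c_Ω · vol(B(x, ρ)). -/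
open Metric Set MeasureTheory

/-!
Around the point `x + t ξ` on the axis of the cone at `x`, the ball of radius `t sin θ` touches
the lateral surface of the cone and stays within distance `t (1 + sin θ)` of `x`. Taking
`t (1 + sin θ)` proportional to `ρ` with a factor making it at most `min r ρ` whenever
`ρ ≤ 1 + sup_Ω ‖y‖`, this ball lies in `B(x, ρ) ∩ Ω` and its radius is a fixed multiple `κ ρ`
of `ρ`; its volume is then `κ ^ d` times that of `B(x, ρ)`.
-/

open Real InnerProductSpace

section InnerProductSpace

variable {E : Type*} [NormedAddCommGroup E] [InnerProductSpace ℝ E]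

theorem cos_mul_norm_le_inner_smul_add {ξ w : E} (hξ : ‖ξ‖ = 1) {t θ : ℝ} (ht : 0 ≤ t)
    (hw : ‖w‖ ≤ t * sin θ) : cos θ * ‖t • ξ + w‖ ≤ ⟪t • ξ + w, ξ⟫_ℝ := by
  set s := ⟪w, ξ⟫_ℝ
  have hs : |s| ≤ ‖w‖ := by simpa [hξ] using abs_real_inner_le_norm w ξ
  have hinner : ⟪t • ξ + w, ξ⟫_ℝ = t + s := by
    rw [inner_add_left, real_inner_smul_left, real_inner_self_eq_norm_sq, hξ]
    ring
  have hnorm : ‖t • ξ + w‖ ^ 2 = t ^ 2 + 2 * t * s + ‖w‖ ^ 2 := by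
    rw [norm_add_sq_real, real_inner_smul_left, norm_smul, hξ, Real.norm_eq_abs,
      abs_of_nonneg ht, real_inner_comm]
    ring
  have hpos : 0 ≤ t + s := by
    nlinarith [abs_le.mp hs, sin_le_one θ]
  -- `(t + s)² - cos² θ ‖t ξ + w‖² ≥ (t sin² θ + s)²` by `‖w‖ ≤ t sin θ` and `sin² + cos² = 1`
  have hsq : (cos θ * ‖t • ξ + w‖) ^ 2 ≤ (t + s) ^ 2 := by
    have hw2 : ‖w‖ ^ 2 ≤ (t * sin θ) ^ 2 := pow_le_pow_left₀ (norm_nonneg w) hw 2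
    rw [mul_pow, hnorm]
    nlinarith [sq_nonneg (t * sin θ ^ 2 + s), sin_sq_add_cos_sq θ,
      mul_le_mul_of_nonneg_left hw2 (sq_nonneg (cos θ))]
  rw [hinner]
  exact abs_le_of_sq_le_sq' hsq hpos |>.2

end InnerProductSpace

theorem ofReal_pow_finrank_mul_measure_ball_le {E : Type*} [NormedAddCommGroup E]
    [NormedSpace ℝ E] [MeasurableSpace E] [BorelSpace E] [FiniteDimensional ℝ E]
    (μ : Measure E) [μ.IsAddHaarMeasure] {s : Set E} {x y : E} {κ ρ : ℝ} (hκ : 0 < κ)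
    (hs : ball y (κ * ρ) ⊆ s) :
    ENNReal.ofReal (κ ^ Module.finrank ℝ E) * μ (ball x ρ) ≤ μ s := by
  rw [Measure.addHaar_ball_center, ← Measure.addHaar_ball_mul_of_pos μ y hκ]
  exact measure_mono hs

section Cone

variable {d : ℕ} {x ξ : EuclideanSpace ℝ (Fin d)} {r θ : ℝ}

theorem mem_cone_of_cos_mul_norm_le_inner (hξ : ‖ξ‖ = 1) {z : EuclideanSpace ℝ (Fin d)}
    (hzr : ‖z - x‖ ≤ r) (hcos : cos θ * ‖z - x‖ ≤ ⟪z - x, ξ⟫_ℝ) : z ∈ cone x ξ r θ := by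
  by_cases hzx : z = x
  · refine ⟨ξ, 0, hξ, ?_, ⟨le_rfl, by simpa [hzx] using hzr⟩, by simp [hzx]⟩
    simpa [real_inner_self_eq_norm_sq, hξ] using cos_le_one θ
  · have hpos : 0 < ‖z - x‖ := norm_pos_iff.mpr (sub_ne_zero.mpr hzx)
    refine ⟨‖z - x‖⁻¹ • (z - x), ‖z - x‖, ?_, ?_, ⟨hpos.le, hzr⟩, ?_⟩
    · rw [norm_smul, norm_inv, norm_norm, inv_mul_cancel₀ hpos.ne']
    · rw [real_inner_smul_left, le_inv_mul_iff₀ hpos, mul_comm]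
      exact hcos
    · rw [smul_smul, mul_inv_cancel₀ hpos.ne', one_smul, add_sub_cancel]

theorem ball_subset_cone (hξ : ‖ξ‖ = 1) {t : ℝ} (ht : 0 ≤ t) (htr : t * (1 + sin θ) ≤ r) :
    ball (x + t • ξ) (t * sin θ) ⊆ cone x ξ r θ := by
  intro z hz
  have hw : ‖z - (x + t • ξ)‖ ≤ t * sin θ := (mem_ball_iff_norm.mp hz).le
  have hzx : z - x = t • ξ + (z - (x + t • ξ)) := by abel
  apply mem_cone_of_cos_mul_norm_le_inner hξ
  · calc ‖z - x‖ ≤ ‖t • ξ‖ + ‖z - (x + t • ξ)‖ := hzx ▸ norm_add_le _ _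
      _ ≤ t + t * sin θ := by
        rw [norm_smul, hξ, Real.norm_eq_abs, abs_of_nonneg ht, mul_one]
        linarith
      _ ≤ r := by linarith
  · rw [hzx]
    exact cos_mul_norm_le_inner_smul_add hξ ht hw

theorem ball_subset_ball_inter_cone (hξ : ‖ξ‖ = 1) {t ρ : ℝ} (ht : 0 ≤ t)
    (htr : t * (1 + sin θ) ≤ min r ρ) :
    ball (x + t • ξ) (t * sin θ) ⊆ ball x ρ ∩ cone x ξ r θ := by
  refine subset_inter (ball_subset_ball' ?_)
    (ball_subset_cone hξ ht (htr.trans (min_le_left _ _)))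
  rw [dist_eq_norm, add_sub_cancel_left, norm_smul, hξ, Real.norm_eq_abs, abs_of_nonneg ht]
  linarith [min_le_right r ρ]

end Cone

theorem volume_ball_inter_ge_of_coneCondition_general {d : ℕ}
    (Ω : Set (EuclideanSpace ℝ (Fin d)))
    (r θ : ℝ) (hr : 0 < r) (hθ : θ ∈ Set.Ioo 0 (Real.pi / 2))
    (hcone : ∀ x ∈ Ω, ∃ ξ : EuclideanSpace ℝ (Fin d), ‖ξ‖ = 1 ∧ cone x ξ r θ ⊆ Ω) :
    ∃ cΩ : ℝ, 0 < cΩ ∧ ∀ x ∈ Ω, ∀ ρ : ℝ, 0 < ρ → ρ ≤ 1 + (⨆ y ∈ Ω, ‖y‖) →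
      ENNReal.ofReal cΩ * volume (ball x ρ) ≤ volume (ball x ρ ∩ Ω) := by
  set R := 1 + ⨆ y ∈ Ω, ‖y‖
  have hR : 0 < R := by
    have := Real.iSup_nonneg fun y : EuclideanSpace ℝ (Fin d) =>
      Real.iSup_nonneg fun (_ : y ∈ Ω) => norm_nonneg y
    linarith
  have hσ : 0 < sin θ := sin_pos_of_pos_of_lt_pi hθ.1 (by linarith [hθ.2, pi_pos])
  set κ := min (r / R) 1 / (1 + sin θ)
  have hκ : 0 < κ := div_pos (lt_min (div_pos hr hR) one_pos) (by linarith)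
  refine ⟨(κ * sin θ) ^ d, by positivity, fun x hx ρ hρ hρR => ?_⟩
  obtain ⟨ξ, hξ, hsub⟩ := hcone x hx
  set t := κ * ρ
  have ht : t * (1 + sin θ) = min (r / R) 1 * ρ := by
    simp only [t, κ]
    field_simp
  have htr : t * (1 + sin θ) ≤ min r ρ := by
    rw [ht]
    refine le_min ?_ (mul_le_of_le_one_left hρ.le (min_le_right _ _))
    calc min (r / R) 1 * ρ ≤ r / R * R := by gcongr; exact min_le_left _ _
      _ = r := div_mul_cancel₀ r hR.ne'
  have hball : ball (x + t • ξ) (κ * sin θ * ρ) ⊆ ball x ρ ∩ Ω := by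
    rw [show κ * sin θ * ρ = t * sin θ by ring]
    exact (ball_subset_ball_inter_cone hξ (by positivity) htr).trans
      (inter_subset_inter_right _ hsub)
  simpa [finrank_euclideanSpace_fin] using
    ofReal_pow_finrank_mul_measure_ball_le volume (x := x) (by positivity) hball

/-- A bounded open set satisfying an interior cone condition has the property that the
volume of `B(x, ρ) ∩ Ω` is at least a fixed proportion of the volume of `B(x, ρ)`, for all
`x ∈ Ω` and `0 < ρ ≤ 1 + sup_{y ∈ Ω} ‖y‖`. -/
theorem volume_ball_inter_ge_of_coneCondition {d : ℕ} (hd : 0 < d)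
    (Ω : Set (EuclideanSpace ℝ (Fin d))) (hΩb : Bornology.IsBounded Ω) (hΩo : IsOpen Ω)
    (r θ : ℝ) (hr : 0 < r) (hθ : θ ∈ Set.Ioo 0 (Real.pi / 2))
    (hcone : ∀ x ∈ Ω, ∃ ξ : EuclideanSpace ℝ (Fin d), ‖ξ‖ = 1 ∧ cone x ξ r θ ⊆ Ω) :
    ∃ cΩ : ℝ, 0 < cΩ ∧ ∀ x ∈ Ω, ∀ ρ : ℝ, 0 < ρ → ρ ≤ 1 + (⨆ y ∈ Ω, ‖y‖) →
      ENNReal.ofReal cΩ * volume (ball x ρ) ≤ volume (ball x ρ ∩ Ω) :=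
  volume_ball_inter_ge_of_coneCondition_general Ω r θ hr hθ hcone
end
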